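/- Let R be a ring and suppose there exists a sequence (r_n | n ∈ ℕ) of elements of R such that for every n ∈ ℕ and every j ≥ 1 one has r_{n+j} ⋯ r_{n+1} R ≠ r_{n+j} ⋯ r_{n+1} r_n R (equivalently, R is not right perfect). Then a free right R-module is regularly weakly based if and only if it is finitely generated. In particular, the countably generated free right R-module R^(ℕ) is not regularly weakly based. -/

import Mathlib

/-- A weak basis of a module: a weakly independent generating set. -/
def IsWeakBasis (R : Type*) [Semiring R] {M : Type*} [AddCommMonoid M]
    [Module R M] (X : Set M) : Prop :=
  (∀ x ∈ X, x ∉ Submodule.span R (X \ {x})) ∧ Submodule.span R X = ⊤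

/-- A module is regularly weakly based if every generating set contains a weak basis. -/
def RegularlyWeaklyBased (R : Type*) [Semiring R] (M : Type*) [AddCommMonoid M]
    [Module R M] : Prop :=
  ∀ X : Set M, Submodule.span R X = ⊤ → ∃ W ⊆ X, IsWeakBasis R W

/-- `seqProd r n j = r (n + j) * ⋯ * r (n + 1)` (and `1` for `j = 0`). -/
def seqProd {R : Type*} [Ring R] (r : ℕ → R) (n : ℕ) : ℕ → R
  | 0 => 1
  | j + 1 => r (n + j + 1) * seqProd r n j

/-!
If `M` is finitely generated, every generating set contains a finite generating subset, and a
minimal one among those is a weak basis. Otherwise `M` has a basis indexed by an infinite set;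
since being regularly weakly based passes to retracts, it suffices to treat `R^(ℕ)` with its
standard basis `e_n`. There the generating set of all `chainGen r n = e_n + e_{n+1} r_n` and
`shiftGen r n = e_{n+1} r_n` contains no weak basis `W`. As no `r_n` is right invertible, `W`
contains every `chainGen r n`. If `shiftGen r n` and `shiftGen r m` with `n < m` were both in `W`,
the first would be redundant, as `e_{n+1}` is reached from `e_m` through the chain. So
`W ⊆ {chainGen r k} ∪ {shiftGen r k | k < n}` for some `n`, and then `e_{n+1} ∈ span W` forces
`r_{n+j} ⋯ r_{n+1} ∈ r_{n+j} ⋯ r_{n+1} r_n R` for large `j`.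
-/

section General

variable {R M A : Type*}

theorem isWeakBasis_of_minimal [Semiring R] [AddCommMonoid M] [Module R M]
    {W : Finset M} (hW : Minimal (fun T : Finset M => Submodule.span R (T : Set M) = ⊤) W) :
    IsWeakBasis R (W : Set M) := by
  classical
  refine ⟨fun x hx hxW => ?_, hW.prop⟩
  have hspan : Submodule.span R (W.erase x : Set M) = ⊤ := by
    rw [eq_top_iff, ← hW.prop, Submodule.span_le, Finset.coe_erase]
    intro w hw
    by_cases hwx : w = x
    · exact hwx ▸ hxW
    · exact Submodule.subset_span ⟨hw, hwx⟩
  have herase : W.erase x = W := hW.eq_of_le hspan (Finset.erase_subset x W)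
  exact Finset.notMem_erase x W (herase.symm ▸ hx)

theorem Module.Finite.exists_finset_subset_span_eq_top [Semiring R] [AddCommMonoid M] [Module R M]
    [Module.Finite R M] {X : Set M} (hX : Submodule.span R X = ⊤) :
    ∃ S : Finset M, ↑S ⊆ X ∧ Submodule.span R (S : Set M) = ⊤ := by
  classical
  obtain ⟨G, hG⟩ := Module.Finite.fg_top (R := R) (M := M)
  have hmem (g : M) : g ∈ Submodule.span R X := hX ▸ Submodule.mem_top
  choose T hTX hgT using fun g => Submodule.mem_span_finite_of_mem_span (hmem g)
  refine ⟨G.biUnion T, by simpa using fun g _ => hTX g, ?_⟩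
  rw [eq_top_iff, ← hG, Submodule.span_le]
  intro g hg
  exact Submodule.span_mono (Finset.coe_subset.mpr (Finset.subset_biUnion_of_mem T hg)) (hgT g)

theorem RegularlyWeaklyBased.of_finite [Semiring R] [AddCommMonoid M] [Module R M]
    [Module.Finite R M] : RegularlyWeaklyBased R M := by
  classical
  intro X hX
  obtain ⟨S, hSX, hS⟩ := Module.Finite.exists_finset_subset_span_eq_top hX
  obtain ⟨W, hWS, hW⟩ := exists_minimal_le_of_wellFoundedLT
    (fun T : Finset M => Submodule.span R (T : Set M) = ⊤) S hS
  exact ⟨W, (Finset.coe_subset.mpr hWS).trans hSX, isWeakBasis_of_minimal hW⟩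

theorem RegularlyWeaklyBased.of_leftInverse [Ring R] [AddCommGroup M] [Module R M]
    [AddCommGroup A] [Module R A] (i : A →ₗ[R] M) (p : M →ₗ[R] A)
    (hpi : Function.LeftInverse p i) (hM : RegularlyWeaklyBased R M) :
    RegularlyWeaklyBased R A := by
  intro X hX
  have hspan : Submodule.span R (i '' X ∪ LinearMap.ker p) = ⊤ := by
    refine eq_top_iff.mpr fun m _ => ?_
    rw [← add_sub_cancel (i (p m)) m]
    refine add_mem (Submodule.span_mono Set.subset_union_left ?_)
      (Submodule.subset_span (Or.inr (by simp [hpi (p m)])))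
    rw [← Submodule.map_span, hX]
    exact Submodule.mem_map_of_mem Submodule.mem_top
  obtain ⟨W, hWX, hWind, hWspan⟩ := hM _ hspan
  refine ⟨X ∩ i ⁻¹' W, Set.inter_subset_left, fun x hx hxspan => ?_, ?_⟩
  · refine hWind (i x) hx.2 (Submodule.span_mono ?_
      (Submodule.apply_mem_span_image_of_mem_span i hxspan))
    rintro _ ⟨y, ⟨⟨-, hyW⟩, hyx⟩, rfl⟩
    exact ⟨hyW, fun h => hyx (hpi.injective h)⟩
  · refine eq_top_iff.mpr fun a _ => ?_
    have hpW : p '' W ⊆ Submodule.span R (X ∩ i ⁻¹' W) := by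
      rintro _ ⟨w, hwW, rfl⟩
      rcases hWX hwW with ⟨x, hxX, rfl⟩ | hw
      · exact Submodule.subset_span ⟨by rwa [hpi x], by rwa [hpi x]⟩
      · rw [SetLike.mem_coe.mp hw]
        exact zero_mem _
    rw [← hpi a]
    exact Submodule.span_le.mpr hpW
      (Submodule.apply_mem_span_image_of_mem_span p (hWspan ▸ Submodule.mem_top))

theorem RegularlyWeaklyBased.of_linearEquiv [Ring R] [AddCommGroup M] [Module R M]
    [AddCommGroup A] [Module R A] (e : A ≃ₗ[R] M) (hM : RegularlyWeaklyBased R M) :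
    RegularlyWeaklyBased R A :=
  hM.of_leftInverse e.toLinearMap e.symm.toLinearMap e.left_inv

theorem RegularlyWeaklyBased.finsupp_of_embedding {N : Type*} [Ring R] [AddCommGroup N]
    [Module R N] {ι κ : Type*} (f : κ ↪ ι) (h : RegularlyWeaklyBased R (ι →₀ N)) :
    RegularlyWeaklyBased R (κ →₀ N) :=
  h.of_leftInverse (Finsupp.lmapDomain N R f) (Finsupp.lcomapDomain f f.injective)
    (Finsupp.leftInverse_lcomapDomain_mapDomain f f.injective)

end General

section Counterexample

open Finsupp MulOpposite Filter

variable {R : Type*} [Ring R]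

theorem mem_span_op_singleton {x y : R} :
    x ∈ Submodule.span Rᵐᵒᵖ {y} ↔ ∃ t, y * t = x := by
  simp only [Submodule.mem_span_singleton, MulOpposite.smul_eq_mul_unop]
  exact ⟨fun ⟨a, ha⟩ => ⟨unop a, ha⟩, fun ⟨t, ht⟩ => ⟨op t, ht⟩⟩

/-- `Submodule.span Rᵐᵒᵖ {a}` is the right ideal `a R`, so this says
`r_{n+j} ⋯ r_{n+1} R ≠ r_{n+j} ⋯ r_{n+1} r_n R` for all `n` and `j ≥ 1`. -/
def IsNonPerfectSeq (r : ℕ → R) : Prop :=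
  ∀ n j, 1 ≤ j → seqProd r n j ∉ Submodule.span Rᵐᵒᵖ {seqProd r n j * r n}

theorem isNonPerfectSeq_of_setOf_ne {r : ℕ → R}
    (hr : ∀ (n j : ℕ), 1 ≤ j →
      {x : R | ∃ s : R, x = seqProd r n j * s} ≠
        {x : R | ∃ s : R, x = seqProd r n j * r n * s}) :
    IsNonPerfectSeq r := by
  intro n j hj hmem
  obtain ⟨t, ht⟩ := mem_span_op_singleton.mp hmem
  refine hr n j hj (Set.ext fun x => ⟨?_, ?_⟩)
  · rintro ⟨s, rfl⟩
    exact ⟨t * s, by rw [← mul_assoc, ht]⟩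
  · rintro ⟨s, rfl⟩
    exact ⟨r n * s, by rw [mul_assoc]⟩

namespace IsNonPerfectSeq

variable {r : ℕ → R}

theorem one_notMem_span (hr : IsNonPerfectSeq r) (n : ℕ) :
    (1 : R) ∉ Submodule.span Rᵐᵒᵖ {r n} := by
  intro h
  obtain ⟨t, ht⟩ := mem_span_op_singleton.mp h
  refine hr n 1 le_rfl (mem_span_op_singleton.mpr ⟨t, ?_⟩)
  simp [seqProd, mul_assoc, ht]

theorem succ_ne_zero (hr : IsNonPerfectSeq r) (n : ℕ) : r (n + 1) ≠ 0 := by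
  intro h
  exact hr n 1 le_rfl (by simp [seqProd, h])

end IsNonPerfectSeq

noncomputable def chainGen (r : ℕ → R) (n : ℕ) : ℕ →₀ R := single n 1 + single (n + 1) (r n)

noncomputable def shiftGen (r : ℕ → R) (n : ℕ) : ℕ →₀ R := single (n + 1) (r n)

variable {r : ℕ → R}

theorem single_eq_op_smul (n : ℕ) (a : R) : single n a = op a • single n (1 : R) := by
  rw [smul_single, op_smul_eq_mul, one_mul]

theorem chainGen_eq_add (n : ℕ) : chainGen r n = single n 1 + shiftGen r n := rfl

theorem shiftGen_apply (k m : ℕ) : shiftGen r k m = if k + 1 = m then r k else 0 :=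
  single_apply

theorem chainGen_apply (k m : ℕ) :
    chainGen r k m = (if k = m then 1 else 0) + if k + 1 = m then r k else 0 := by
  simp [chainGen_eq_add, single_apply, shiftGen_apply]

theorem chainGen_apply_of_ne {k m : ℕ} (h : k ≠ m) : chainGen r k m = shiftGen r k m := by
  simp [chainGen_eq_add, h]

theorem shiftGen_apply_mem_span (k m : ℕ) :
    shiftGen r k m ∈ Submodule.span Rᵐᵒᵖ {r (m - 1)} := by
  rw [shiftGen_apply]
  split_ifs with h
  · subst h
    exact Submodule.mem_span_singleton_self _
  · exact zero_mem _

theorem span_chainGen_shiftGen (r : ℕ → R) :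
    Submodule.span Rᵐᵒᵖ (Set.range (chainGen r) ∪ Set.range (shiftGen r)) = ⊤ := by
  refine eq_top_iff.mpr fun g _ => ?_
  rw [← g.sum_single]
  refine Submodule.finsuppSum_mem _ _ _ _ fun n _ => ?_
  rw [single_eq_op_smul, ← add_sub_cancel_right (single n 1) (shiftGen r n), ← chainGen_eq_add]
  exact Submodule.smul_mem _ _ (sub_mem (Submodule.subset_span (Or.inl ⟨n, rfl⟩))
    (Submodule.subset_span (Or.inr ⟨n, rfl⟩)))

theorem chainGen_mem_of_span_eq_top (hr : IsNonPerfectSeq r) {W : Set (ℕ →₀ R)}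
    (hWX : W ⊆ Set.range (chainGen r) ∪ Set.range (shiftGen r))
    (hW : Submodule.span Rᵐᵒᵖ W = ⊤) (n : ℕ) : chainGen r n ∈ W := by
  by_contra hn
  have h1 : (1 : R) ∈ Submodule.span Rᵐᵒᵖ (lapply (R := Rᵐᵒᵖ) n '' W) := by
    simpa using Submodule.apply_mem_span_image_of_mem_span (lapply (R := Rᵐᵒᵖ) n)
      (hW ▸ Submodule.mem_top : single n (1 : R) ∈ Submodule.span Rᵐᵒᵖ W)
  refine hr.one_notMem_span (n - 1) (Submodule.span_le.mpr ?_ h1)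
  rintro _ ⟨w, hw, rfl⟩
  rcases hWX hw with ⟨k, rfl⟩ | ⟨k, rfl⟩
  · rw [lapply_apply, chainGen_apply_of_ne (by rintro rfl; exact hn hw)]
    exact shiftGen_apply_mem_span k n
  · exact shiftGen_apply_mem_span k n

theorem single_mem_of_chainGen_mem {p : Submodule Rᵐᵒᵖ (ℕ →₀ R)} (hp : ∀ k, chainGen r k ∈ p)
    {k m : ℕ} (hm : single m 1 ∈ p) (hkm : k ≤ m) : single k 1 ∈ p := by
  refine Nat.decreasingInduction (motive := fun k _ => single k 1 ∈ p) (fun k _ ih => ?_) hm hkm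
  rw [← add_sub_cancel_right (single k 1) (shiftGen r k), ← chainGen_eq_add, shiftGen,
    single_eq_op_smul]
  exact sub_mem (hp k) (Submodule.smul_mem _ _ ih)

theorem chainGen_ne_shiftGen (hr : IsNonPerfectSeq r) (k n : ℕ) : chainGen r k ≠ shiftGen r n := by
  intro h
  have hk := congrArg (· k) h
  simp only [chainGen_eq_add, coe_add, Pi.add_apply, single_eq_same, shiftGen_apply k k,
    if_neg (Nat.succ_ne_self k), add_zero, shiftGen_apply n k] at hk
  refine hr.one_notMem_span n ?_
  split_ifs at hk
  · exact hk ▸ Submodule.mem_span_singleton_self _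
  · exact hk ▸ zero_mem _

theorem shiftGen_ne_shiftGen (hr : IsNonPerfectSeq r) {m n : ℕ} (hnm : n < m) :
    shiftGen r m ≠ shiftGen r n := by
  obtain ⟨m, rfl⟩ := Nat.exists_eq_add_of_lt hnm
  rw [shiftGen, shiftGen, Ne, single_eq_single_iff]
  rintro (⟨h, -⟩ | ⟨h, -⟩)
  · omega
  · exact hr.succ_ne_zero _ h

theorem not_lt_of_shiftGen_mem (hr : IsNonPerfectSeq r) {W : Set (ℕ →₀ R)}
    (hind : ∀ x ∈ W, x ∉ Submodule.span Rᵐᵒᵖ (W \ {x})) (hy : ∀ k, chainGen r k ∈ W)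
    {m n : ℕ} (hn : shiftGen r n ∈ W) (hm : shiftGen r m ∈ W) : ¬ n < m := by
  intro hnm
  set p := Submodule.span Rᵐᵒᵖ (W \ {shiftGen r n})
  have hyp (k : ℕ) : chainGen r k ∈ p :=
    Submodule.subset_span ⟨hy k, chainGen_ne_shiftGen hr k n⟩
  have hzm : shiftGen r m ∈ p := Submodule.subset_span ⟨hm, shiftGen_ne_shiftGen hr hnm⟩
  have hem : single m (1 : R) ∈ p := by
    rw [← add_sub_cancel_right (single m 1) (shiftGen r m), ← chainGen_eq_add]
    exact sub_mem (hyp m) hzm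
  have hzn : shiftGen r n ∈ p := by
    rw [shiftGen, single_eq_op_smul]
    exact Submodule.smul_mem _ _ (single_mem_of_chainGen_mem (k := n + 1) hyp hem hnm)
  exact hind _ hn hzn

/-- `tailFunctional r n j g = ∑_{i ≤ j} (-1)^(j-i) r_{n+j} ⋯ r_{n+i+1} g_{n+i+1}`: it kills
`chainGen r k` for `n < k` except when `k = n + 1 + j`, and sends `e_{n+1}` to
`± r_{n+j} ⋯ r_{n+1}`. -/
noncomputable def tailFunctional (r : ℕ → R) (n : ℕ) : ℕ → (ℕ →₀ R) →ₗ[Rᵐᵒᵖ] R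
  | 0 => lapply (n + 1)
  | j + 1 => lapply (n + j + 2) - LinearMap.mulLeft Rᵐᵒᵖ (r (n + j + 1)) ∘ₗ tailFunctional r n j

theorem tailFunctional_zero (n : ℕ) (g : ℕ →₀ R) : tailFunctional r n 0 g = g (n + 1) := rfl

theorem tailFunctional_succ (n j : ℕ) (g : ℕ →₀ R) :
    tailFunctional r n (j + 1) g = g (n + j + 2) - r (n + j + 1) * tailFunctional r n j g := rfl

theorem tailFunctional_eq_zero {n : ℕ} {g : ℕ →₀ R} (hg : ∀ m, n < m → g m = 0) (j : ℕ) :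
    tailFunctional r n j g = 0 := by
  induction j with
  | zero => exact hg _ (Nat.lt_succ_self n)
  | succ j ih => rw [tailFunctional_succ, ih, hg _ (by omega), mul_zero, sub_zero]

theorem tailFunctional_chainGen_self (n j : ℕ) :
    tailFunctional r n j (chainGen r n) ∈ Submodule.span Rᵐᵒᵖ {seqProd r n j * r n} := by
  induction j with
  | zero => simp [tailFunctional_zero, chainGen_eq_add, shiftGen, seqProd]
  | succ j ih =>
    obtain ⟨t, ht⟩ := mem_span_op_singleton.mp ih
    have h0 : chainGen r n (n + j + 2) = 0 := by
      rw [chainGen_apply_of_ne (by omega), shiftGen_apply, if_neg (by omega)]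
    rw [tailFunctional_succ, h0, ← ht]
    refine mem_span_op_singleton.mpr ⟨-t, ?_⟩
    simp [seqProd, mul_assoc]

theorem tailFunctional_chainGen_of_lt {n k : ℕ} (hnk : n < k) (j : ℕ) :
    tailFunctional r n j (chainGen r k) = if k = n + 1 + j then 1 else 0 := by
  induction j with
  | zero =>
    rw [tailFunctional_zero, chainGen_apply]
    split_ifs <;> first | omega | simp
  | succ j ih =>
    rw [tailFunctional_succ, ih, chainGen_apply]
    split_ifs <;> first | omega | simp
    obtain rfl : k = n + j + 1 := by omega
    exact sub_self _

theorem tailFunctional_single (n j : ℕ) :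
    tailFunctional r n j (single (n + 1) 1) = seqProd r n j ∨
      tailFunctional r n j (single (n + 1) 1) = -seqProd r n j := by
  induction j with
  | zero => exact Or.inl (by simp [tailFunctional_zero, seqProd])
  | succ j ih =>
    have h0 : single (n + 1) (1 : R) (n + j + 2) = 0 := single_eq_of_ne (by omega)
    rw [tailFunctional_succ, h0, zero_sub]
    rcases ih with h | h <;> simp [h, seqProd]

theorem eventually_tailFunctional_mem {n : ℕ} {g : ℕ →₀ R}
    (hg : g ∈ Submodule.span Rᵐᵒᵖ (Set.range (chainGen r) ∪ shiftGen r '' Set.Iio n)) :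
    ∀ᶠ j in atTop, tailFunctional r n j g ∈ Submodule.span Rᵐᵒᵖ {seqProd r n j * r n} := by
  induction hg using Submodule.span_induction with
  | mem g hg =>
    rcases hg with ⟨k, rfl⟩ | ⟨k, hk, rfl⟩
    · rcases lt_trichotomy k n with hkn | rfl | hnk
      · refine Eventually.of_forall fun j => ?_
        rw [tailFunctional_eq_zero (fun m hm => ?_) j]
        · exact zero_mem _
        · rw [chainGen_apply, if_neg (by omega), if_neg (by omega), add_zero]
      · exact Eventually.of_forall (tailFunctional_chainGen_self k)
      · filter_upwards [eventually_ge_atTop k] with j hj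
        rw [tailFunctional_chainGen_of_lt hnk, if_neg (by omega)]
        exact zero_mem _
    · refine Eventually.of_forall fun j => ?_
      rw [tailFunctional_eq_zero (fun m hm => ?_) j]
      · exact zero_mem _
      · rw [shiftGen_apply, if_neg (by simp at hk; omega)]
  | zero => exact Eventually.of_forall fun j => by simp
  | add x y _ _ hx hy =>
    filter_upwards [hx, hy] with j hxj hyj
    rw [map_add]
    exact add_mem hxj hyj
  | smul a x _ hx =>
    filter_upwards [hx] with j hxj
    rw [map_smul]
    exact Submodule.smul_mem _ a hxj

theorem single_notMem_span_chainGen_shiftGen (hr : IsNonPerfectSeq r) (n : ℕ) :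
    single (n + 1) (1 : R) ∉
      Submodule.span Rᵐᵒᵖ (Set.range (chainGen r) ∪ shiftGen r '' Set.Iio n) := by
  intro h
  obtain ⟨j, hj, hj1⟩ := ((eventually_tailFunctional_mem h).and (eventually_ge_atTop 1)).exists
  refine hr n j hj1 ?_
  rcases tailFunctional_single (r := r) n j with h | h <;> rw [h] at hj
  · exact hj
  · exact neg_mem_iff.mp hj

theorem not_regularlyWeaklyBased_finsupp (hr : IsNonPerfectSeq r) :
    ¬ RegularlyWeaklyBased Rᵐᵒᵖ (ℕ →₀ R) := by
  intro hRWB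
  obtain ⟨W, hWX, hind, hW⟩ := hRWB _ (span_chainGen_shiftGen r)
  have hy := chainGen_mem_of_span_eq_top hr hWX hW
  have hZ : {k | shiftGen r k ∈ W}.Subsingleton := fun n hn m hm =>
    le_antisymm (not_lt.mp (not_lt_of_shiftGen_mem hr hind hy hm hn))
      (not_lt.mp (not_lt_of_shiftGen_mem hr hind hy hn hm))
  obtain ⟨N, hN⟩ := hZ.finite.bddAbove
  refine single_notMem_span_chainGen_shiftGen hr (N + 1)
    (Submodule.span_mono ?_ (hW ▸ Submodule.mem_top))
  intro w hw
  rcases hWX hw with ⟨k, rfl⟩ | ⟨k, rfl⟩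
  · exact Or.inl ⟨k, rfl⟩
  · exact Or.inr ⟨k, Nat.lt_succ_of_le (hN hw), rfl⟩

end Counterexample

theorem not_regularlyWeaklyBased_of_basis {R M ι : Type*} [Ring R] [AddCommGroup M]
    [Module Rᵐᵒᵖ M] {r : ℕ → R} (hr : IsNonPerfectSeq r) [Infinite ι]
    (b : Module.Basis ι Rᵐᵒᵖ M) : ¬ RegularlyWeaklyBased Rᵐᵒᵖ M := fun hM =>
  not_regularlyWeaklyBased_finsupp hr <|
    ((hM.of_linearEquiv b.repr.symm).of_linearEquiv
      (Finsupp.mapRange.linearEquiv (MulOpposite.opLinearEquiv Rᵐᵒᵖ))).finsupp_of_embedding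
      (Infinite.natEmbedding ι)

theorem free_regularlyWeaklyBased_iff_finite_of_not_rightPerfect.{v}
    (R : Type*) [Ring R] (r : ℕ → R)
    (hr : ∀ (n j : ℕ), 1 ≤ j →
      {x : R | ∃ s : R, x = seqProd r n j * s} ≠
        {x : R | ∃ s : R, x = seqProd r n j * r n * s}) :
    (∀ (M : Type v) [AddCommGroup M] [Module Rᵐᵒᵖ M], Module.Free Rᵐᵒᵖ M →
      (RegularlyWeaklyBased Rᵐᵒᵖ M ↔ Module.Finite Rᵐᵒᵖ M)) ∧
    ¬ RegularlyWeaklyBased Rᵐᵒᵖ (ℕ →₀ R) := by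
  have hr' := isNonPerfectSeq_of_setOf_ne hr
  refine ⟨fun M _ _ _ => ⟨fun hM => ?_, fun _ => .of_finite⟩,
    not_regularlyWeaklyBased_finsupp hr'⟩
  by_contra hfin
  have : Infinite (Module.Free.ChooseBasisIndex Rᵐᵒᵖ M) := by
    rw [← not_finite_iff_infinite]
    exact fun _ => hfin (.of_basis (Module.Free.chooseBasis Rᵐᵒᵖ M))
  exact not_regularlyWeaklyBased_of_basis hr' (Module.Free.chooseBasis Rᵐᵒᵖ M) hM
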